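/- arXiv:math/9904133 — 2 statements merged into one kernel-verified Lean document; each statement's English description precedes it below -/
import Mathlib

section
/- The distance function d on A(C) is a metric: for all elements x, y, z of A(C), d(x,y) ≥ 0; d(x,y) = 0 if and only if x = y; d(x,y) = d(y,x); and d(x,z) ≤ d(x,y) + d(y,z). Consequently (A(C), d) is a metric space. -/
/-- The separation moment of two functions. -/
noncomputable def sepMoment {C : Type*} (ρ₁ ρ₂ : ℝ) (f₁ f₂ : ℝ → C) : ℝ :=
  sSup {t : ℝ | t ≤ min ρ₁ ρ₂ ∧ ∀ t' < t, f₁ t' = f₂ t'}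

/-- The space `A(C)` of functions `f : (-∞, ρ) → C` that are eventually `0` to the left
and piecewise constant from the right (encoded as pairs `(ρ, f)` with `f : ℝ → C`
vanishing on `[ρ, ∞)`). -/
structure Atree (C : Type*) [Zero C] where
  ρ : ℝ
  f : ℝ → C
  zero_of_ge : ∀ t, ρ ≤ t → f t = 0
  exists_tail : ∃ τ ≤ ρ, ∀ t < τ, f t = 0
  piecewise : ∀ t < ρ, ∃ ε > 0, ∀ t' ∈ Set.Icc t (t + ε), f t' = f t

/-- The "railroad-track" distance on `A(C)`. -/
noncomputable def Adist {C : Type*} [Zero C] (x y : Atree C) : ℝ :=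
  (x.ρ - sepMoment x.ρ y.ρ x.f y.f) + (y.ρ - sepMoment x.ρ y.ρ x.f y.f)



section Aux
variable {C : Type*} [Zero C]

def sepSet {C : Type*} (ρ₁ ρ₂ : ℝ) (f₁ f₂ : ℝ → C) : Set ℝ :=
  {t : ℝ | t ≤ min ρ₁ ρ₂ ∧ ∀ t' < t, f₁ t' = f₂ t'}

lemma sepSet_nonempty (x y : Atree C) : (sepSet x.ρ y.ρ x.f y.f).Nonempty := by
  obtain ⟨τ₁, _, h₁⟩ := x.exists_tail
  obtain ⟨τ₂, _, h₂⟩ := y.exists_tail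
  refine ⟨min (min τ₁ τ₂) (min x.ρ y.ρ), min_le_right _ _, fun t' ht' => ?_⟩
  have h1 : t' < τ₁ := lt_of_lt_of_le ht' ((min_le_left _ _).trans (min_le_left _ _))
  have h2 : t' < τ₂ := lt_of_lt_of_le ht' ((min_le_left _ _).trans (min_le_right _ _))
  rw [h₁ t' h1, h₂ t' h2]

lemma sepSet_bdd (x y : Atree C) : BddAbove (sepSet x.ρ y.ρ x.f y.f) :=
  ⟨min x.ρ y.ρ, fun _ ht => ht.1⟩

lemma sep_mem (x y : Atree C) :
    sepMoment x.ρ y.ρ x.f y.f ∈ sepSet x.ρ y.ρ x.f y.f := by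
  constructor
  · exact csSup_le (sepSet_nonempty x y) (fun _ ht => ht.1)
  · intro t' ht'
    obtain ⟨t, htS, hlt⟩ := exists_lt_of_lt_csSup (sepSet_nonempty x y) ht'
    exact htS.2 t' hlt

lemma le_sep (x y : Atree C) {t : ℝ} (ht : t ∈ sepSet x.ρ y.ρ x.f y.f) :
    t ≤ sepMoment x.ρ y.ρ x.f y.f := le_csSup (sepSet_bdd x y) ht

lemma sep_comm (x y : Atree C) :
    sepMoment x.ρ y.ρ x.f y.f = sepMoment y.ρ x.ρ y.f x.f := by
  unfold sepMoment
  congr 1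
  ext t
  simp only [Set.mem_setOf_eq, min_comm x.ρ y.ρ]
  exact and_congr_right (fun _ => forall₂_congr fun t' _ => eq_comm)

lemma Atree.ext' {x y : Atree C} (h1 : x.ρ = y.ρ) (h2 : x.f = y.f) : x = y := by
  cases x; cases y; simp_all

lemma sep_nonneg_terms (x y : Atree C) :
    sepMoment x.ρ y.ρ x.f y.f ≤ x.ρ ∧ sepMoment x.ρ y.ρ x.f y.f ≤ y.ρ := by
  have h := (sep_mem x y).1
  exact ⟨h.trans (min_le_left _ _), h.trans (min_le_right _ _)⟩

end Aux

/-- The distance `d` on `A(C)` is a metric: it is nonnegative, vanishes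
exactly on the diagonal, is symmetric, and satisfies the triangle inequality. -/
theorem Adist_is_metric {C : Type*} [Zero C] :
    (∀ x y : Atree C, 0 ≤ Adist x y) ∧
    (∀ x y : Atree C, Adist x y = 0 ↔ x = y) ∧
    (∀ x y : Atree C, Adist x y = Adist y x) ∧
    (∀ x y z : Atree C, Adist x z ≤ Adist x y + Adist y z) := by
  refine ⟨fun x y => ?_, fun x y => ?_, fun x y => ?_, fun x y z => ?_⟩
  · have h := sep_nonneg_terms x y
    unfold Adist; linarith [h.1, h.2]
  · constructor
    · intro h
      have hn := sep_nonneg_terms x y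
      have h1 : sepMoment x.ρ y.ρ x.f y.f = x.ρ := by unfold Adist at h; linarith [hn.1, hn.2]
      have h2 : sepMoment x.ρ y.ρ x.f y.f = y.ρ := by unfold Adist at h; linarith [hn.1, hn.2]
      refine Atree.ext' (h1 ▸ h2.symm ▸ rfl) (funext fun t => ?_)
      rcases lt_or_ge t x.ρ with ht | ht
      · exact (sep_mem x y).2 t (by rw [h1]; exact ht)
      · rw [x.zero_of_ge t ht, y.zero_of_ge t (by rw [← h2, h1]; exact ht)]
    · rintro rfl
      have hmem : x.ρ ∈ sepSet x.ρ x.ρ x.f x.f := ⟨by simp, fun _ _ => rfl⟩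
      have h1 : sepMoment x.ρ x.ρ x.f x.f = x.ρ :=
        le_antisymm (sep_nonneg_terms x x).1 (le_sep x x hmem)
      unfold Adist; rw [h1]; ring
  · unfold Adist; rw [sep_comm x y]; ring
  · set s12 := sepMoment x.ρ y.ρ x.f y.f with hs12
    set s23 := sepMoment y.ρ z.ρ y.f z.f with hs23
    set s13 := sepMoment x.ρ z.ρ x.f z.f with hs13
    have hkey : min s12 s23 ≤ s13 := by
      apply le_sep x z
      refine ⟨le_min ((min_le_left _ _).trans (sep_nonneg_terms x y).1)
        ((min_le_right _ _).trans (sep_nonneg_terms y z).2), fun t' ht' => ?_⟩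
      have e1 := (sep_mem x y).2 t' (lt_of_lt_of_le ht' (min_le_left _ _))
      have e2 := (sep_mem y z).2 t' (lt_of_lt_of_le ht' (min_le_right _ _))
      rw [e1, e2]
    have h12 := sep_nonneg_terms x y
    have h23 := sep_nonneg_terms y z
    have h13 := sep_nonneg_terms x z
    unfold Adist
    rw [← hs12, ← hs23, ← hs13]
    rcases le_total s12 s23 with h | h
    · have : s12 ≤ s13 := le_trans (by simp [h]) hkey
      linarith [h12.1, h12.2, h23.1, h23.2]
    · have : s23 ≤ s13 := le_trans (by simp [h]) hkey
      linarith [h12.1, h12.2, h23.1, h23.2]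
end

section
/- Let u, v be real numbers with u > 0 and v > 0, and let φ be a real number with 0 < φ ≤ π. Suppose w : ℕ → ℝ satisfies w n ≥ 0 and cosh (w n) = cosh(u·n) · cosh(v·n) − cos φ · sinh(u·n) · sinh(v·n) for every n. Then w n / n converges to u + v as n → ∞. -/
/-- **Statement 13.** If `w n ≥ 0` satisfies the hyperbolic cosine rule
`cosh (w n) = cosh (u n) cosh (v n) − cos φ sinh (u n) sinh (v n)` with `u, v > 0` and
`0 < φ ≤ π`, then `w n / n → u + v`. -/
theorem hyperbolic_side_growth (u v : ℝ) (hu : 0 < u) (hv : 0 < v)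
    (φ : ℝ) (hφ₀ : 0 < φ) (hφπ : φ ≤ Real.pi) (w : ℕ → ℝ) (hw₀ : ∀ n, 0 ≤ w n)
    (hw : ∀ n : ℕ, Real.cosh (w n) =
      Real.cosh (u * n) * Real.cosh (v * n) -
        Real.cos φ * Real.sinh (u * n) * Real.sinh (v * n)) :
    Filter.Tendsto (fun n : ℕ => w n / (n : ℝ)) Filter.atTop (nhds (u + v)) := by
  have hc1 : Real.cos φ < 1 := by
    have := Real.cos_lt_cos_of_nonneg_of_le_pi le_rfl hφπ hφ₀
    simpa using this
  set δ : ℝ := 1 - max (Real.cos φ) 0 with hδdef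
  have hδpos : 0 < δ := by
    have : max (Real.cos φ) 0 < 1 := max_lt hc1 one_pos
    simp only [hδdef]; linarith
  have hδ1 : δ ≤ 1 := by
    have : (0:ℝ) ≤ max (Real.cos φ) 0 := le_max_right _ _
    simp only [hδdef]; linarith
  -- upper bound : w n ≤ (u+v) n
  have hub : ∀ n : ℕ, w n ≤ (u + v) * n := by
    intro n
    have h1 : Real.cosh (w n) ≤ Real.cosh ((u + v) * n) := by
      rw [hw n, add_mul, Real.cosh_add]
      have hs1 : 0 ≤ Real.sinh (u * n) := Real.sinh_nonneg_iff.2 (by positivity)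
      have hs2 : 0 ≤ Real.sinh (v * n) := Real.sinh_nonneg_iff.2 (by positivity)
      have hkey : 0 ≤ (1 + Real.cos φ) * (Real.sinh (u * n) * Real.sinh (v * n)) :=
        mul_nonneg (by linarith [Real.neg_one_le_cos φ]) (mul_nonneg hs1 hs2)
      nlinarith
    have := Real.cosh_le_cosh.1 h1
    rw [abs_of_nonneg (hw₀ n), abs_of_nonneg (by positivity : (0:ℝ) ≤ (u+v)*n)] at this
    exact this
  -- lower bound : w n ≥ (u+v) n + log (δ/4)
  have hlb : ∀ n : ℕ, (u + v) * n + Real.log (δ / 4) ≤ w n := by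
    intro n
    have hcw : δ * (Real.cosh (u * n) * Real.cosh (v * n)) ≤ Real.cosh (w n) := by
      rw [hw n]
      have hs1 : 0 ≤ Real.sinh (u * n) := Real.sinh_nonneg_iff.2 (by positivity)
      have hs2 : 0 ≤ Real.sinh (v * n) := Real.sinh_nonneg_iff.2 (by positivity)
      have hsc1 : Real.sinh (u * n) ≤ Real.cosh (u * n) := (Real.sinh_lt_cosh _).le
      have hsc2 : Real.sinh (v * n) ≤ Real.cosh (v * n) := (Real.sinh_lt_cosh _).le
      have hmax : Real.cos φ ≤ max (Real.cos φ) 0 := le_max_left _ _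
      have hmax0 : 0 ≤ max (Real.cos φ) 0 := le_max_right _ _
      have key : Real.cos φ * Real.sinh (u * n) * Real.sinh (v * n)
          ≤ max (Real.cos φ) 0 * (Real.cosh (u * n) * Real.cosh (v * n)) := by
        calc Real.cos φ * Real.sinh (u * n) * Real.sinh (v * n)
            ≤ max (Real.cos φ) 0 * (Real.sinh (u * n) * Real.sinh (v * n)) := by
              rw [mul_assoc]
              exact mul_le_mul_of_nonneg_right hmax (mul_nonneg hs1 hs2)
          _ ≤ max (Real.cos φ) 0 * (Real.cosh (u * n) * Real.cosh (v * n)) := by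
              exact mul_le_mul_of_nonneg_left
                (mul_le_mul hsc1 hsc2 hs2 (Real.cosh_pos _).le) hmax0
      simp only [hδdef]
      nlinarith
    have he1 : Real.exp (u * n) / 2 ≤ Real.cosh (u * n) := by
      rw [Real.cosh_eq]; have := (Real.exp_pos (-(u * n))).le; linarith
    have he2 : Real.exp (v * n) / 2 ≤ Real.cosh (v * n) := by
      rw [Real.cosh_eq]; have := (Real.exp_pos (-(v * n))).le; linarith
    have hcwe : Real.cosh (w n) ≤ Real.exp (w n) := by
      rw [Real.cosh_eq]
      have : Real.exp (-(w n)) ≤ Real.exp (w n) :=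
        Real.exp_le_exp.2 (by linarith [hw₀ n])
      linarith
    have hexp : δ / 4 * Real.exp ((u + v) * n) ≤ Real.exp (w n) := by
      have h4 : δ / 4 * Real.exp ((u + v) * n)
          = δ * (Real.exp (u * n) / 2 * (Real.exp (v * n) / 2)) := by
        rw [add_mul, Real.exp_add]; ring
      calc δ / 4 * Real.exp ((u + v) * n)
          = δ * (Real.exp (u * n) / 2 * (Real.exp (v * n) / 2)) := h4
        _ ≤ δ * (Real.cosh (u * n) * Real.cosh (v * n)) := by
            apply mul_le_mul_of_nonneg_left _ hδpos.le
            exact mul_le_mul he1 he2 (by positivity) (Real.cosh_pos _).le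
        _ ≤ Real.cosh (w n) := hcw
        _ ≤ Real.exp (w n) := hcwe
    have hlog := Real.log_le_log (by positivity) hexp
    rwa [Real.log_mul (by positivity) (Real.exp_ne_zero _), Real.log_exp,
      Real.log_exp, add_comm] at hlog
  -- squeeze
  have hA : Filter.Tendsto (fun n : ℕ => (u + v) + Real.log (δ / 4) / n)
      Filter.atTop (nhds (u + v)) := by
    have := Filter.Tendsto.const_mul (Real.log (δ / 4))
      (tendsto_one_div_atTop_nhds_zero_nat)
    have h0 : Filter.Tendsto (fun n : ℕ => Real.log (δ / 4) / n)
        Filter.atTop (nhds 0) := by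
      simpa [div_eq_mul_inv, one_div] using this
    simpa using (tendsto_const_nhds.add h0 :
      Filter.Tendsto (fun n : ℕ => (u + v) + Real.log (δ / 4) / n)
        Filter.atTop (nhds ((u + v) + 0)))
  refine tendsto_of_tendsto_of_tendsto_of_le_of_le' hA tendsto_const_nhds ?_ ?_
  · filter_upwards [Filter.eventually_gt_atTop 0] with n hn
    have hnpos : (0:ℝ) < n := by exact_mod_cast hn
    rw [le_div_iff₀ hnpos, add_mul, div_mul_cancel₀ _ hnpos.ne']
    linarith [hlb n]
  · filter_upwards [Filter.eventually_gt_atTop 0] with n hn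
    have hnpos : (0:ℝ) < n := by exact_mod_cast hn
    rw [div_le_iff₀ hnpos]
    linarith [hub n]
end
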